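/- arXiv:2309.06267 — 4 statements merged into one kernel-verified Lean document; each statement's English description precedes it below -/
import Mathlib

section
/- Let A be a countable alphabet, P a probability distribution on A with finite Shannon entropy H(P) = -∑_{a∈A} P(a) log₂ P(a) < ∞, and let D be a proper and almost surely complete dictionary over A. Then H(D) = H(P) · l̄(D), where H(D) = -∑_{α∈D} P(α) log₂ P(α) is the entropy of the dictionary and l̄(D) = ∑_{α∈D} P(α)|α| is its average length (both sums taken in [0,∞]). -/
open scoped ENNReal
open Filter

/-- The probability of a finite string, obtained by extending the
distribution `P` multiplicatively: `P(a₁⋯aₙ) = ∏ᵢ P(aᵢ)`. -/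
noncomputable def strProb {A : Type*} (P : PMF A) (l : List A) : ℝ≥0∞ :=
  (l.map fun a => P a).prod

/-- A dictionary is a set of nonempty finite strings. -/
def IsDictionary {A : Type*} (D : Set (List A)) : Prop :=
  ∀ α ∈ D, α ≠ []

/-- A dictionary is proper if no string in it is a (proper) prefix of
another string in it. -/
def IsProper {A : Type*} (D : Set (List A)) : Prop :=
  ∀ α ∈ D, ∀ β ∈ D, α <+: β → α = β

/-- A dictionary is complete if every infinite sequence over `A` has a
prefix in it. -/
def IsCompleteDict {A : Type*} (D : Set (List A)) : Prop :=
  ∀ x : ℕ → A, ∃ α ∈ D, α = (List.range α.length).map x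

/-- The probability that the length-`n` prefix of a random infinite sequence
has some prefix belonging to `D`. -/
noncomputable def prefixProb {A : Type*} (P : PMF A) (D : Set (List A)) (n : ℕ) : ℝ≥0∞ :=
  ∑' γ : {γ : List A // γ.length = n ∧ ∃ β ∈ D, β <+: γ}, strProb P γ

/-- `D` is almost surely complete: under the infinite product measure `P^ℕ`,
the event that an infinite sequence has a prefix in `D` has probability `1`.
(By continuity from below, this probability is the limit, as `n → ∞`, of the
probability that the length-`n` prefix has a prefix in `D`.) -/
def IsASC {A : Type*} (P : PMF A) (D : Set (List A)) : Prop :=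
  Tendsto (prefixProb P D) atTop (nhds 1)

/-- `Tset D n` = strings of length `n` having no prefix in `D`. -/
def Tset {A : Type*} (D : Set (List A)) (n : ℕ) : Set (List A) :=
  {α | α.length = n ∧ ∀ β ∈ D, ¬ β <+: α}

/-- `Dperp D n = {α ∈ D : |α| = n} ∪ Tₙ`. -/
def Dperp {A : Type*} (D : Set (List A)) (n : ℕ) : Set (List A) :=
  {α ∈ D | α.length = n} ∪ Tset D n

/-- `Dn D n = {α ∈ D : |α| < n} ∪ Dₙ^⊥`. -/
def Dn {A : Type*} (D : Set (List A)) (n : ℕ) : Set (List A) :=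
  {α ∈ D | α.length < n} ∪ Dperp D n

/-- The one-letter extensions `αA = {αa : a ∈ A}` of a string `α`. -/
def oneExt {A : Type*} (α : List A) : Set (List A) :=
  {l | ∃ a : A, l = α ++ [a]}

/-- The extension `D[α] = (D \ {α}) ∪ αA` of a dictionary at `α`. -/
def extendDict {A : Type*} (D : Set (List A)) (α : List A) : Set (List A) :=
  (D \ {α}) ∪ oneExt α

/-- The nonnegative entropy contribution `-p log₂ p ∈ [0,∞]` of a
probability value `p`. -/
noncomputable def entTerm (p : ℝ≥0∞) : ℝ≥0∞ :=
  ENNReal.ofReal (-(p.toReal * Real.logb 2 p.toReal))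

/-- The entropy `H(E) = -∑_{α∈E} P(α) log₂ P(α)` of a dictionary, in `[0,∞]`. -/
noncomputable def dictEntropy {A : Type*} (P : PMF A) (E : Set (List A)) : ℝ≥0∞ :=
  ∑' α : E, entTerm (strProb P α)

/-- The average length `l̄(E) = ∑_{α∈E} P(α)|α|` of a dictionary, in `[0,∞]`. -/
noncomputable def avgLen {A : Type*} (P : PMF A) (E : Set (List A)) : ℝ≥0∞ :=
  ∑' α : E, strProb P α * (α : List A).length

/-- The source entropy `H(P) = -∑_{a∈A} P(a) log₂ P(a)`, in `[0,∞]`. -/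
noncomputable def srcEntropy {A : Type*} (P : PMF A) : ℝ≥0∞ :=
  ∑' a : A, entTerm (P a)

/-!
Call a string *internal* if it has no prefix in `D`. For an internal `γ` (or `γ ∈ D`), properness
and almost sure completeness give Kraft's equality `∑_{α ∈ D, γ ⊑ α} P(α) = P(γ)`: at each length
`m`, the mass `P(γ)` of the length-`m` extensions of `γ` is shared between the words of `D` below
`γ` and the internal strings of length `m`, whose total mass tends to `0`. Writing
`P(α) ∑ᵢ w(αᵢ)` as a sum over the prefixes `γa` of `α` and exchanging the sums then gives, for
every weight `w` on letters,
`∑_{α ∈ D} P(α) ∑ᵢ w(αᵢ) = (∑_a P(a) w(a)) ⬝ ∑_{γ internal} P(γ)`.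
With `w = 1` this reads `l̄(D) = ∑_{γ internal} P(γ)`. With `w(a) = -log₂ P(a)` the left side is
`H(D)`, because `-log₂ P(α) = ∑ᵢ -log₂ P(αᵢ)`, and the right side is `H(P) ⬝ l̄(D)`.
-/

open Topology

section Development

variable {A : Type*} (P : PMF A)

@[simp]
lemma strProb_nil : strProb P [] = 1 := rfl

@[simp]
lemma strProb_cons (a : A) (l : List A) : strProb P (a :: l) = P a * strProb P l := by
  simp [strProb]

@[simp]
lemma strProb_append (l₁ l₂ : List A) :
    strProb P (l₁ ++ l₂) = strProb P l₁ * strProb P l₂ := by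
  simp [strProb]

@[simp]
lemma strProb_singleton (a : A) : strProb P [a] = P a := by
  simp [strProb]

lemma strProb_le_one (l : List A) : strProb P l ≤ 1 := by
  induction l with
  | nil => simp
  | cons a l ih => simpa using mul_le_one' (P.coe_le_one a) ih

noncomputable def setProb (s : Set (List A)) : ℝ≥0∞ :=
  ∑' γ : s, strProb P γ

lemma setProb_mono {s t : Set (List A)} (h : s ⊆ t) : setProb P s ≤ setProb P t :=
  ENNReal.tsum_mono_subtype _ h

lemma setProb_union {s t : Set (List A)} (h : Disjoint s t) :
    setProb P (s ∪ t) = setProb P s + setProb P t :=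
  ENNReal.summable.tsum_union_disjoint h ENNReal.summable

lemma setProb_singleton (γ : List A) : setProb P {γ} = strProb P γ :=
  tsum_singleton γ _

lemma setProb_iUnion {ι : Type*} {t : ι → Set (List A)} (h : Set.univ.PairwiseDisjoint t) :
    setProb P (⋃ i, t i) = ∑' i, setProb P (t i) :=
  ENNReal.tsum_biUnion h

lemma setProb_biUnion {ι : Type*} {S : Set ι} {t : ι → Set (List A)}
    (h : S.PairwiseDisjoint t) : setProb P (⋃ i ∈ S, t i) = ∑' i : S, setProb P (t i) :=
  ENNReal.tsum_biUnion' h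

lemma setProb_eq_tsum_indicator (s : Set (List A)) :
    setProb P s = ∑' γ, s.indicator (strProb P) γ :=
  tsum_subtype s _

lemma exists_concat_prefix_of_prefix {δ γ : List A} (h : δ <+: γ) (hlt : δ.length < γ.length) :
    ∃ a, δ ++ [a] <+: γ := by
  obtain ⟨_ | ⟨a, ρ⟩, rfl⟩ := h
  · simp at hlt
  · exact ⟨a, by simp⟩

lemma setProb_length_eq_add_prefix (δ : List A) (k : ℕ) :
    setProb P {γ | γ.length = δ.length + k ∧ δ <+: γ} = strProb P δ := by
  induction k generalizing δ with
  | zero =>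
    have h : {γ | γ.length = δ.length + 0 ∧ δ <+: γ} = {δ} := by
      ext γ
      simp only [add_zero, Set.mem_ofPred_eq, Set.mem_singleton_iff]
      exact ⟨fun ⟨hl, hp⟩ => (hp.eq_of_length hl.symm).symm,
        fun h => ⟨h ▸ rfl, h ▸ List.prefix_refl _⟩⟩
    rw [h, setProb_singleton]
  | succ k ih =>
    have h : {γ | γ.length = δ.length + (k + 1) ∧ δ <+: γ}
        = ⋃ a, {γ | γ.length = (δ ++ [a]).length + k ∧ δ ++ [a] <+: γ} := by
      ext γ
      simp only [List.length_append, List.length_singleton, Set.mem_ofPred_eq, Set.mem_iUnion]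
      constructor
      · rintro ⟨hl, hp⟩
        obtain ⟨a, ha⟩ := exists_concat_prefix_of_prefix hp (by omega)
        exact ⟨a, by omega, ha⟩
      · rintro ⟨a, hl, hp⟩
        exact ⟨by omega, (List.prefix_append _ _).trans hp⟩
    have hdisj : Set.univ.PairwiseDisjoint
        fun a => {γ | γ.length = (δ ++ [a]).length + k ∧ δ ++ [a] <+: γ} := by
      intro a _ b _ hab
      refine Set.disjoint_left.mpr fun γ ha hb => hab ?_
      have : δ ++ [a] = δ ++ [b] := by
        rcases List.prefix_or_prefix_of_prefix ha.2 hb.2 with h | h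
        · exact h.eq_of_length (by simp)
        · exact (h.eq_of_length (by simp)).symm
      simpa using this
    simp_rw [h, setProb_iUnion P hdisj, ih, strProb_append, ENNReal.tsum_mul_left]
    simp [strProb, P.tsum_coe]

lemma setProb_length_eq_prefix {δ : List A} {m : ℕ} (hm : δ.length ≤ m) :
    setProb P {γ | γ.length = m ∧ δ <+: γ} = strProb P δ := by
  obtain ⟨k, rfl⟩ := Nat.exists_eq_add_of_le hm
  exact setProb_length_eq_add_prefix P δ k

lemma tendsto_setProb_inter_length_le (s : Set (List A)) :
    Tendsto (fun m => setProb P (s ∩ {γ | γ.length ≤ m})) atTop (𝓝 (setProb P s)) := by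
  have hmono : Monotone fun m => setProb P (s ∩ {γ | γ.length ≤ m}) := fun m n hmn =>
    setProb_mono P fun γ hγ => ⟨hγ.1, hγ.2.trans hmn⟩
  convert tendsto_atTop_iSup hmono
  refine le_antisymm ?_ (iSup_le fun m => setProb_mono P Set.inter_subset_left)
  rw [setProb_eq_tsum_indicator, ENNReal.tsum_eq_iSup_sum]
  refine iSup_le fun F => le_iSup_of_le (F.sup List.length) ?_
  rw [setProb_eq_tsum_indicator]
  calc ∑ γ ∈ F, s.indicator (strProb P) γ
      = ∑ γ ∈ F, (s ∩ {γ | γ.length ≤ F.sup List.length}).indicator (strProb P) γ := by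
        refine Finset.sum_congr rfl fun γ hγ => ?_
        have hγF : γ ∈ {γ | γ.length ≤ F.sup List.length} := Finset.le_sup (f := List.length) hγ
        rw [Set.inter_comm, ← Set.indicator_indicator, Set.indicator_of_mem hγF]
    _ ≤ _ := ENNReal.sum_le_tsum F

section Dictionary

variable {D : Set (List A)}

def internalNodes (D : Set (List A)) : Set (List A) :=
  {γ | ∀ β ∈ D, ¬ β <+: γ}

lemma setProb_length_eq_prefix_eq_add_Tset (D : Set (List A)) (γ : List A) (m : ℕ) :
    setProb P {δ | δ.length = m ∧ γ <+: δ}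
      = setProb P {δ | (δ.length = m ∧ γ <+: δ) ∧ ∃ β ∈ D, β <+: δ}
        + setProb P (Tset D m ∩ {δ | γ <+: δ}) := by
  rw [← setProb_union]
  · congr 1
    ext δ
    simp only [Tset, Set.mem_ofPred_eq, Set.mem_union, Set.mem_inter_iff]
    constructor
    · intro hδ
      by_cases h : ∃ β ∈ D, β <+: δ
      · exact Or.inl ⟨hδ, h⟩
      · push Not at h
        exact Or.inr ⟨⟨hδ.1, h⟩, hδ.2⟩
    · rintro (⟨hδ, -⟩ | ⟨⟨hl, -⟩, hp⟩)
      exacts [hδ, ⟨hl, hp⟩]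
  · refine Set.disjoint_left.mpr fun δ ⟨_, β, hβD, hβδ⟩ ⟨⟨_, hT⟩, _⟩ => hT β hβD hβδ

lemma prefixProb_add_setProb_Tset (D : Set (List A)) (m : ℕ) :
    prefixProb P D m + setProb P (Tset D m) = 1 := by
  have h := setProb_length_eq_prefix_eq_add_Tset P D [] m
  rw [setProb_length_eq_prefix P (Nat.zero_le m), strProb_nil] at h
  simp only [List.nil_prefix, and_true, Set.ofPred_true, Set.inter_univ] at h
  exact h.symm

lemma tendsto_setProb_Tset (hasc : IsASC P D) :
    Tendsto (fun m => setProb P (Tset D m)) atTop (𝓝 0) := by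
  have h : ∀ m, setProb P (Tset D m) = 1 - prefixProb P D m := fun m => by
    have hm := prefixProb_add_setProb_Tset P D m
    rw [← hm, ENNReal.add_sub_cancel_left (ne_top_of_le_ne_top ENNReal.one_ne_top
      (hm ▸ le_self_add))]
  simpa [h] using ENNReal.Tendsto.sub tendsto_const_nhds hasc (Or.inl ENNReal.one_ne_top)

lemma setProb_hasDictPrefix_eq_dict_length_le (hprop : IsProper D) {γ : List A}
    (hγ : ∀ β ∈ D, β <+: γ → γ <+: β) (m : ℕ) :
    setProb P {δ | (δ.length = m ∧ γ <+: δ) ∧ ∃ β ∈ D, β <+: δ}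
      = setProb P (D ∩ {β | γ <+: β} ∩ {β | β.length ≤ m}) := by
  have hU : {δ | (δ.length = m ∧ γ <+: δ) ∧ ∃ β ∈ D, β <+: δ}
      = ⋃ β ∈ D ∩ {β | γ <+: β} ∩ {β | β.length ≤ m}, {δ | δ.length = m ∧ β <+: δ} := by
    ext δ
    simp only [Set.mem_ofPred_eq, Set.mem_iUnion, Set.mem_inter_iff, exists_prop]
    constructor
    · rintro ⟨⟨hl, hγδ⟩, β, hβD, hβδ⟩
      have hγβ : γ <+: β := (List.prefix_or_prefix_of_prefix hγδ hβδ).elim id (hγ β hβD)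
      exact ⟨β, ⟨⟨hβD, hγβ⟩, hl ▸ hβδ.length_le⟩, hl, hβδ⟩
    · rintro ⟨β, ⟨⟨hβD, hγβ⟩, -⟩, hl, hβδ⟩
      exact ⟨⟨hl, hγβ.trans hβδ⟩, β, hβD, hβδ⟩
  have hdisj : (D ∩ {β | γ <+: β} ∩ {β | β.length ≤ m}).PairwiseDisjoint
      fun β => {δ | δ.length = m ∧ β <+: δ} := by
    intro β₁ h₁ β₂ h₂ hne
    refine Set.disjoint_left.mpr fun δ hδ₁ hδ₂ => hne ?_
    rcases List.prefix_or_prefix_of_prefix hδ₁.2 hδ₂.2 with h | h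
    · exact hprop β₁ h₁.1.1 β₂ h₂.1.1 h
    · exact (hprop β₂ h₂.1.1 β₁ h₁.1.1 h).symm
  rw [hU, setProb_biUnion P hdisj]
  exact tsum_congr fun β => setProb_length_eq_prefix P β.2.2

/-- Kraft's equality below `γ`. The hypothesis on `γ` says that no word of `D` is a proper prefix
of `γ`: it holds both for `γ ∈ D` and for internal `γ`. -/
lemma setProb_dict_inter_prefix (hprop : IsProper D) (hasc : IsASC P D) {γ : List A}
    (hγ : ∀ β ∈ D, β <+: γ → γ <+: β) :
    setProb P (D ∩ {β | γ <+: β}) = strProb P γ := by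
  have hsplit : ∀ m ≥ γ.length, setProb P (D ∩ {β | γ <+: β} ∩ {β | β.length ≤ m})
      + setProb P (Tset D m ∩ {δ | γ <+: δ}) = strProb P γ := fun m hm => by
    rw [← setProb_hasDictPrefix_eq_dict_length_le P hprop hγ,
      ← setProb_length_eq_prefix_eq_add_Tset, setProb_length_eq_prefix P hm]
  have hT : Tendsto (fun m => setProb P (Tset D m ∩ {δ | γ <+: δ})) atTop (𝓝 0) :=
    tendsto_of_tendsto_of_tendsto_of_le_of_le tendsto_const_nhds (tendsto_setProb_Tset P hasc)
      (fun _ => zero_le) fun _ => setProb_mono P Set.inter_subset_left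
  have hlim := (tendsto_setProb_inter_length_le P (D ∩ {β | γ <+: β})).add hT
  rw [add_zero] at hlim
  exact tendsto_nhds_unique hlim <| tendsto_const_nhds.congr' <|
    (eventually_ge_atTop γ.length).mono fun m hm => (hsplit m hm).symm

lemma setProb_dict_inter_concat_prefix (hprop : IsProper D) (hasc : IsASC P D)
    (γ : List A) (a : A) :
    setProb P (D ∩ {β | γ ++ [a] <+: β}) = (internalNodes D).indicator (strProb P) γ * P a := by
  by_cases hγ : γ ∈ internalNodes D
  · rw [Set.indicator_of_mem hγ, ← strProb_singleton, ← strProb_append]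
    refine setProb_dict_inter_prefix P hprop hasc fun β hβ hβγa => ?_
    rcases List.prefix_concat_iff.mp hβγa with rfl | h
    · exact List.prefix_refl _
    · exact (hγ β hβ h).elim
  · obtain ⟨β, hβD, hβγ⟩ : ∃ β ∈ D, β <+: γ := by simpa [internalNodes] using hγ
    have hempty : D ∩ {β | γ ++ [a] <+: β} = ∅ := by
      refine Set.eq_empty_of_forall_notMem fun α ⟨hαD, hγα⟩ => ?_
      obtain rfl := hprop β hβD α hαD (hβγ.trans ((List.prefix_append _ _).trans hγα))
      have := hγα.length_le
      have := hβγ.length_le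
      simp only [List.length_append, List.length_singleton] at *
      omega
    rw [Set.indicator_of_notMem hγ, zero_mul, hempty, setProb, tsum_empty]

end Dictionary

lemma tsum_concat_prefix (w : A → ℝ≥0∞) (α : List A) :
    ∑' q : {q : List A × A | q.1 ++ [q.2] <+: α}, w q.1.2 = (α.map w).sum := by
  induction α using List.reverseRecOn with
  | nil => simp
  | append_singleton α b ih =>
    have hset : {q : List A × A | q.1 ++ [q.2] <+: α ++ [b]}
        = {(α, b)} ∪ {q | q.1 ++ [q.2] <+: α} := by
      ext ⟨γ, a⟩
      simp [List.prefix_concat_iff, List.append_singleton_inj]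
    have hdisj : Disjoint {(α, b)} {q : List A × A | q.1 ++ [q.2] <+: α} :=
      Set.disjoint_singleton_left.mpr fun h => by simpa using h.length_le
    rw [hset, ENNReal.summable.tsum_union_disjoint (f := fun q : List A × A => w q.2) hdisj
      ENNReal.summable, tsum_singleton (f := fun q : List A × A => w q.2), ih]
    simp [add_comm]

lemma tsum_dict_strProb_mul_sum_map {D : Set (List A)} (hprop : IsProper D) (hasc : IsASC P D)
    (w : A → ℝ≥0∞) :
    ∑' α : D, strProb P α * (α.1.map w).sum
      = setProb P (internalNodes D) * ∑' a, P a * w a := by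
  calc ∑' α : D, strProb P α * (α.1.map w).sum
      = ∑' α : D, ∑' q : List A × A,
          {β | q.1 ++ [q.2] <+: β}.indicator (strProb P) α * w q.2 := by
        refine tsum_congr fun α => ?_
        rw [← tsum_concat_prefix, ← ENNReal.tsum_mul_left,
          tsum_subtype _ fun q : List A × A => strProb P α * w q.2]
        refine tsum_congr fun q => ?_
        by_cases h : q.1 ++ [q.2] <+: α.1 <;> simp [Set.indicator, h]
    _ = ∑' q : List A × A, setProb P (D ∩ {β | q.1 ++ [q.2] <+: β}) * w q.2 := by
        rw [ENNReal.tsum_comm]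
        refine tsum_congr fun q => ?_
        rw [ENNReal.tsum_mul_right, setProb, tsum_subtype D, tsum_subtype (D ∩ _),
          Set.indicator_indicator]
    _ = ∑' γ, ∑' a, (internalNodes D).indicator (strProb P) γ * (P a * w a) := by
        simp_rw [setProb_dict_inter_concat_prefix P hprop hasc, mul_assoc]
        exact ENNReal.tsum_prod'
    _ = setProb P (internalNodes D) * ∑' a, P a * w a := by
        simp_rw [ENNReal.tsum_mul_left]
        rw [ENNReal.tsum_mul_right, setProb_eq_tsum_indicator]

noncomputable def selfInfo (p : ℝ≥0∞) : ℝ≥0∞ :=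
  ENNReal.ofReal (-Real.logb 2 p.toReal)

lemma entTerm_eq_mul_selfInfo {p : ℝ≥0∞} (hp : p ≠ ⊤) : entTerm p = p * selfInfo p := by
  rw [entTerm, selfInfo, neg_mul_eq_mul_neg, ENNReal.ofReal_mul ENNReal.toReal_nonneg,
    ENNReal.ofReal_toReal hp]

lemma neg_logb_toReal_nonneg {p : ℝ≥0∞} (hp : p ≤ 1) : 0 ≤ -Real.logb 2 p.toReal :=
  neg_nonneg.mpr <| Real.logb_nonpos one_lt_two ENNReal.toReal_nonneg <|
    ENNReal.toReal_le_of_le_ofReal zero_le_one (by simpa using hp)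

lemma selfInfo_mul {x y : ℝ≥0∞} (hx₀ : x ≠ 0) (hy₀ : y ≠ 0) (hx : x ≤ 1) (hy : y ≤ 1) :
    selfInfo (x * y) = selfInfo x + selfInfo y := by
  have hxr : x.toReal ≠ 0 :=
    ENNReal.toReal_ne_zero.mpr ⟨hx₀, ne_top_of_le_ne_top ENNReal.one_ne_top hx⟩
  have hyr : y.toReal ≠ 0 :=
    ENNReal.toReal_ne_zero.mpr ⟨hy₀, ne_top_of_le_ne_top ENNReal.one_ne_top hy⟩
  rw [selfInfo, selfInfo, selfInfo, ENNReal.toReal_mul, Real.logb_mul hxr hyr, neg_add,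
    ENNReal.ofReal_add (neg_logb_toReal_nonneg hx) (neg_logb_toReal_nonneg hy)]

lemma selfInfo_strProb {l : List A} (hl : strProb P l ≠ 0) :
    selfInfo (strProb P l) = (l.map fun a => selfInfo (P a)).sum := by
  induction l with
  | nil => simp [selfInfo]
  | cons a l ih =>
    rw [strProb_cons, mul_ne_zero_iff] at hl
    rw [strProb_cons, selfInfo_mul hl.1 hl.2 (P.coe_le_one a) (strProb_le_one P l), ih hl.2,
      List.map_cons, List.sum_cons]

lemma entTerm_strProb (l : List A) :
    entTerm (strProb P l) = strProb P l * (l.map fun a => selfInfo (P a)).sum := by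
  rw [entTerm_eq_mul_selfInfo (ne_top_of_le_ne_top ENNReal.one_ne_top (strProb_le_one P l))]
  rcases eq_or_ne (strProb P l) 0 with h | h
  · simp [h]
  · rw [selfInfo_strProb P h]

end Development

theorem dictEntropy_eq_srcEntropy_mul_avgLen_general {A : Type*}
    (P : PMF A) (D : Set (List A))
    (hprop : IsProper D) (hasc : IsASC P D) :
    dictEntropy P D = srcEntropy P * avgLen P D := by
  have hlen : avgLen P D = setProb P (internalNodes D) := by
    simpa [avgLen, List.map_const', P.tsum_coe] using
      tsum_dict_strProb_mul_sum_map P hprop hasc fun _ => 1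
  have hsrc : srcEntropy P = ∑' a, P a * selfInfo (P a) :=
    tsum_congr fun a => entTerm_eq_mul_selfInfo (P.apply_ne_top a)
  rw [dictEntropy, hlen, hsrc, mul_comm, ← tsum_dict_strProb_mul_sum_map P hprop hasc]
  exact tsum_congr fun α => entTerm_strProb P α

/-- For a countable alphabet `A`, a distribution `P` with finite
entropy, and a proper and almost surely complete dictionary `D`,
`H(D) = H(P) ⬝ l̄(D)`. -/
theorem dictEntropy_eq_srcEntropy_mul_avgLen {A : Type*} [Countable A]
    (P : PMF A) (hH : srcEntropy P < ⊤) (D : Set (List A))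
    (hdict : IsDictionary D) (hprop : IsProper D) (hasc : IsASC P D) :
    dictEntropy P D = srcEntropy P * avgLen P D :=
  dictEntropy_eq_srcEntropy_mul_avgLen_general P D hprop hasc
end

section
/- Let A be a countable alphabet, P a probability distribution on A, and D a proper and almost surely complete dictionary over A. Let β be any finite string over A such that no string of D of length strictly less than |β| is a prefix of β. Then ∑_{α ∈ (D,β)} P(α) = P(β), where (D,β) = {α ∈ D : β is a prefix of α}. -/
open scoped ENNReal
open Filter

/-! Work at a finite depth `n ≥ |β|`. The strings of length `n` extending `β` have total mass
`P(β)`. Since `D` is proper, those having a prefix in `D` are partitioned according to that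
prefix `α`, which extends `β` by the hypothesis on `β`; so they carry the mass of the
`α ∈ (D,β)` with `|α| ≤ n`. The others have no prefix in `D`, and their mass
`1 - prefixProb P D n` tends to `0` by almost sure completeness. Together with Kraft's
inequality this squeezes `∑_{α ∈ (D,β)} P(α)` to `P(β)`. -/

open scoped Topology

section

variable {A : Type*} {D E : Set (List A)}

def lengthExtensions (n : ℕ) (β : List A) : Set (List A) :=
  {γ | γ.length = n ∧ β <+: γ}

lemma tsum_strProb_oneExt (P : PMF A) (α : List A) :
    ∑' γ : oneExt α, strProb P γ = strProb P α := by
  have hrange : oneExt α = Set.range fun a : A => α ++ [a] := by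
    ext; simp [oneExt, eq_comm]
  have hinj : Function.Injective fun a : A => α ++ [a] := fun a b h => by simpa using h
  rw [hrange, tsum_range _ hinj]
  simp [strProb, ENNReal.tsum_mul_left]

lemma pairwiseDisjoint_oneExt (s : Set (List A)) : s.PairwiseDisjoint oneExt := by
  rintro α - α' - hne
  refine Set.disjoint_left.2 ?_
  rintro _ ⟨a, rfl⟩ ⟨a', h⟩
  exact hne (List.append_inj' h rfl).1

lemma lengthExtensions_length (β : List A) : lengthExtensions β.length β = {β} := by
  ext γ
  constructor
  · rintro ⟨hlen, hβ⟩
    exact (hβ.eq_of_length hlen.symm).symm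
  · rintro rfl
    exact ⟨rfl, List.prefix_refl γ⟩

lemma lengthExtensions_succ {n : ℕ} {β : List A} (hn : β.length ≤ n) :
    lengthExtensions (n + 1) β = ⋃ δ ∈ lengthExtensions n β, oneExt δ := by
  ext γ
  simp only [lengthExtensions, oneExt, Set.mem_iUnion, Set.mem_ofPred_eq, exists_prop]
  constructor
  · rintro ⟨hlen, hβ⟩
    have hne : γ ≠ [] := by rintro rfl; simp at hlen
    have hβγ : β <+: γ.dropLast :=
      List.prefix_of_prefix_length_le hβ (List.dropLast_prefix γ) (by simp [hlen, hn])
    exact ⟨γ.dropLast, ⟨by simp [hlen], hβγ⟩, γ.getLast hne,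
      (List.dropLast_append_getLast hne).symm⟩
  · rintro ⟨δ, ⟨hlen, hβ⟩, a, rfl⟩
    exact ⟨by simp [hlen], hβ.trans (List.prefix_append δ [a])⟩

lemma tsum_strProb_lengthExtensions (P : PMF A) {n : ℕ} {β : List A} (hn : β.length ≤ n) :
    ∑' γ : lengthExtensions n β, strProb P γ = strProb P β := by
  induction n, hn using Nat.le_induction with
  | base => rw [lengthExtensions_length, tsum_singleton]
  | succ n hn ih =>
    rw [lengthExtensions_succ hn, ENNReal.tsum_biUnion' (pairwiseDisjoint_oneExt _)]
    simp only [tsum_strProb_oneExt]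
    exact ih

lemma IsProper.mono (hD : IsProper D) (hE : E ⊆ D) : IsProper E :=
  fun α hα α' hα' => hD α (hE hα) α' (hE hα')

lemma IsProper.pairwiseDisjoint_lengthExtensions (hD : IsProper D) (n : ℕ) :
    D.PairwiseDisjoint (lengthExtensions n) := by
  rintro α hα α' hα' hne
  refine Set.disjoint_left.2 fun γ hγ hγ' => hne ?_
  rcases List.prefix_or_prefix_of_prefix hγ.2 hγ'.2 with h | h
  · exact hD α hα α' hα' h
  · exact (hD α' hα' α hα h).symm

lemma IsProper.tsum_strProb_biUnion_lengthExtensions (P : PMF A) (hD : IsProper D) {n : ℕ}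
    (hlen : ∀ α ∈ D, α.length ≤ n) :
    ∑' γ : ⋃ α ∈ D, lengthExtensions n α, strProb P γ = ∑' α : D, strProb P α := by
  rw [ENNReal.tsum_biUnion' (hD.pairwiseDisjoint_lengthExtensions n)]
  exact tsum_congr fun α => tsum_strProb_lengthExtensions P (hlen α α.2)

lemma tsum_le_of_forall_length_le (f : List A → ℝ≥0∞) {c : ℝ≥0∞}
    (h : ∀ n, ∑' α : {α ∈ E | α.length ≤ n}, f α ≤ c) : ∑' α : E, f α ≤ c := by
  rw [tsum_subtype, ENNReal.tsum_eq_iSup_sum]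
  refine iSup_le fun s => ?_
  calc ∑ α ∈ s, E.indicator f α
      ≤ ∑ α ∈ s, {α ∈ E | α.length ≤ s.sup List.length}.indicator f α := by
        refine Finset.sum_le_sum fun α hα => le_of_eq ?_
        by_cases hαE : α ∈ E
        · simp [Set.indicator, hαE, Finset.le_sup (f := List.length) hα]
        · simp [Set.indicator, hαE]
    _ ≤ ∑' α, {α ∈ E | α.length ≤ s.sup List.length}.indicator f α := ENNReal.sum_le_tsum s
    _ ≤ c := (tsum_subtype _ f).symm.trans_le (h _)

theorem IsProper.tsum_strProb_le (P : PMF A) (hD : IsProper D) {β : List A}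
    (hβ : ∀ α ∈ D, β <+: α) : ∑' α : D, strProb P α ≤ strProb P β := by
  refine tsum_le_of_forall_length_le _ fun n => ?_
  set m := max n β.length
  have hDm : IsProper {α ∈ D | α.length ≤ m} := hD.mono fun α hα => hα.1
  calc ∑' α : {α ∈ D | α.length ≤ n}, strProb P α
      ≤ ∑' α : {α ∈ D | α.length ≤ m}, strProb P α :=
        ENNReal.tsum_mono_subtype _ fun α hα => ⟨hα.1, hα.2.trans (le_max_left n _)⟩
    _ = ∑' γ : ⋃ α ∈ {α ∈ D | α.length ≤ m}, lengthExtensions m α, strProb P γ :=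
        (hDm.tsum_strProb_biUnion_lengthExtensions P fun α hα => hα.2).symm
    _ ≤ ∑' γ : lengthExtensions m β, strProb P γ := by
        refine ENNReal.tsum_mono_subtype _ ?_
        simp only [Set.iUnion_subset_iff]
        exact fun α hα γ hγ => ⟨hγ.1, (hβ α hα.1).trans hγ.2⟩
    _ = strProb P β := tsum_strProb_lengthExtensions P (le_max_right n _)

lemma prefixProb_add_tsum_strProb_Tset (P : PMF A) (n : ℕ) :
    prefixProb P D n + ∑' γ : Tset D n, strProb P γ = 1 := by
  set S : Set (List A) := {γ | γ.length = n ∧ ∃ β ∈ D, β <+: γ}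
  have hdisj : Disjoint S (Tset D n) :=
    Set.disjoint_left.2 fun γ ⟨_, β, hβD, hβγ⟩ hT => hT.2 β hβD hβγ
  have hunion : S ∪ Tset D n = lengthExtensions n [] := by
    ext γ
    simp only [S, Tset, lengthExtensions, Set.mem_union, Set.mem_ofPred_eq, List.nil_prefix,
      and_true]
    constructor
    · rintro (h | h) <;> exact h.1
    · intro hlen
      by_cases h : ∃ β ∈ D, β <+: γ
      · exact Or.inl ⟨hlen, h⟩
      · exact Or.inr ⟨hlen, fun β hβ hβγ => h ⟨β, hβ, hβγ⟩⟩
  change ∑' γ : S, strProb P γ + _ = 1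
  rw [← ENNReal.summable.tsum_union_disjoint hdisj ENNReal.summable, hunion,
    tsum_strProb_lengthExtensions P (Nat.zero_le n)]
  rfl

lemma tendsto_tsum_strProb_Tset {P : PMF A} (hasc : IsASC P D) :
    Tendsto (fun n => ∑' γ : Tset D n, strProb P γ) atTop (𝓝 0) := by
  have hsub : ∀ n, ∑' γ : Tset D n, strProb P γ = 1 - prefixProb P D n := fun n =>
    ENNReal.eq_sub_of_add_eq (ne_top_of_le_ne_top ENNReal.one_ne_top
      (le_self_add.trans (prefixProb_add_tsum_strProb_Tset P n).le)) <|
      (add_comm _ _).trans (prefixProb_add_tsum_strProb_Tset P n)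
  simpa [hsub] using
    ENNReal.Tendsto.sub tendsto_const_nhds hasc (Or.inl ENNReal.one_ne_top)

lemma lengthExtensions_subset_biUnion_union_Tset {β : List A} {n : ℕ}
    (hβ : ∀ γ ∈ D, γ.length < β.length → ¬ γ <+: β) :
    lengthExtensions n β ⊆
      (⋃ α ∈ {α ∈ {α ∈ D | β <+: α} | α.length ≤ n}, lengthExtensions n α) ∪ Tset D n := by
  rintro γ ⟨hlen, hβγ⟩
  by_cases h : ∃ δ ∈ D, δ <+: γ
  · obtain ⟨δ, hδD, hδγ⟩ := h
    have hβδ : β <+: δ := List.prefix_of_prefix_length_le hβγ hδγ <| not_lt.1 fun hlt =>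
      hβ δ hδD hlt (List.prefix_of_prefix_length_le hδγ hβγ hlt.le)
    exact Or.inl (Set.mem_biUnion ⟨⟨hδD, hβδ⟩, hlen ▸ hδγ.length_le⟩ ⟨hlen, hδγ⟩)
  · exact Or.inr ⟨hlen, fun δ hδ hδγ => h ⟨δ, hδ, hδγ⟩⟩

lemma strProb_le_tsum_add_tsum_strProb_Tset (P : PMF A) (hprop : IsProper D) {β : List A}
    (hβ : ∀ γ ∈ D, γ.length < β.length → ¬ γ <+: β) {n : ℕ} (hn : β.length ≤ n) :
    strProb P β ≤ ∑' α : {α ∈ D | β <+: α}, strProb P α + ∑' γ : Tset D n, strProb P γ := by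
  set W := {α ∈ D | β <+: α}
  set Wn := {α ∈ W | α.length ≤ n}
  have hWn : IsProper Wn := hprop.mono fun α hα => hα.1.1
  calc strProb P β = ∑' γ : lengthExtensions n β, strProb P γ :=
        (tsum_strProb_lengthExtensions P hn).symm
    _ ≤ ∑' γ : ↥((⋃ α ∈ Wn, lengthExtensions n α) ∪ Tset D n), strProb P γ :=
        ENNReal.tsum_mono_subtype _ (lengthExtensions_subset_biUnion_union_Tset hβ)
    _ ≤ ∑' γ : ⋃ α ∈ Wn, lengthExtensions n α, strProb P γ + ∑' γ : Tset D n, strProb P γ :=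
        ENNReal.tsum_union_le _ _ _
    _ = ∑' α : Wn, strProb P α + ∑' γ : Tset D n, strProb P γ := by
        rw [hWn.tsum_strProb_biUnion_lengthExtensions P fun α hα => hα.2]
    _ ≤ ∑' α : W, strProb P α + ∑' γ : Tset D n, strProb P γ := by
        gcongr
        exact ENNReal.tsum_mono_subtype _ fun α hα => hα.1

end

theorem tsum_strProb_prefixSet_eq_general {A : Type*} (P : PMF A)
    (D : Set (List A)) (hprop : IsProper D)
    (hasc : IsASC P D) (β : List A)
    (hβ : ∀ γ ∈ D, γ.length < β.length → ¬ γ <+: β) :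
    ∑' α : {α ∈ D | β <+: α}, strProb P (α : List A) = strProb P β := by
  refine le_antisymm ((hprop.mono fun α hα => hα.1).tsum_strProb_le P fun α hα => hα.2) ?_
  have hlim := (tendsto_tsum_strProb_Tset hasc).const_add
    (∑' α : {α ∈ D | β <+: α}, strProb P α)
  rw [add_zero] at hlim
  exact ge_of_tendsto hlim <| eventually_atTop.2
    ⟨β.length, fun n hn => strProb_le_tsum_add_tsum_strProb_Tset P hprop hβ hn⟩

/-- If `D` is proper and almost surely complete and no string
of `D` of length `< |β|` is a prefix of `β`, then `∑_{α ∈ (D,β)} P(α) = P(β)`. -/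
theorem tsum_strProb_prefixSet_eq {A : Type*} [Countable A] (P : PMF A)
    (D : Set (List A)) (hdict : IsDictionary D) (hprop : IsProper D)
    (hasc : IsASC P D) (β : List A)
    (hβ : ∀ γ ∈ D, γ.length < β.length → ¬ γ <+: β) :
    ∑' α : {α ∈ D | β <+: α}, strProb P (α : List A) = strProb P β :=
  tsum_strProb_prefixSet_eq_general P D hprop hasc β hβ
end

section
/- Let D be a proper and complete dictionary over an alphabet A and let α ∈ D. Then the extended dictionary D[α] = (D \ {α}) ∪ {αa : a ∈ A} is also proper and complete. -/
open scoped ENNReal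
open Filter

/-- If `D` is a proper and complete dictionary and `α ∈ D`,
then the extension `D[α] = (D \ {α}) ∪ αA` is also proper and complete. -/
theorem extendDict_isProper_and_isComplete {A : Type*} (D : Set (List A))
    (hdict : IsDictionary D) (hprop : IsProper D) (hcomp : IsCompleteDict D)
    (α : List A) (hα : α ∈ D) :
    IsProper (extendDict D α) ∧ IsCompleteDict (extendDict D α) := by
  constructor
  · rintro β hβ γ hγ hpre
    rcases hβ with ⟨hβD, hβne⟩ | ⟨a, rfl⟩
    · rcases hγ with ⟨hγD, hγne⟩ | ⟨b, rfl⟩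
      · exact hprop β hβD γ hγD hpre
      · rcases List.prefix_concat_iff.mp hpre with h | h
        · exact h
        · exact absurd (hprop β hβD α hα h) hβne
    · rcases hγ with ⟨hγD, hγne⟩ | ⟨b, rfl⟩
      · have hαγ : α <+: γ := List.IsPrefix.trans (List.prefix_append α [a]) hpre
        exact absurd (hprop α hα γ hγD hαγ) (fun h => hγne (h ▸ rfl))
      · exact hpre.eq_of_length (by simp)
  · intro x
    obtain ⟨β, hβD, hβ⟩ := hcomp x
    by_cases hβα : β = α
    · subst hβα
      refine ⟨β ++ [x β.length], Or.inr ⟨x β.length, rfl⟩, ?_⟩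
      have : (β ++ [x β.length]).length = β.length + 1 := by simp
      rw [this, List.range_succ, List.map_append]
      simp [← hβ]
    · exact ⟨β, Or.inl ⟨hβD, hβα⟩, hβ⟩
end

section
/- Let A be a countably infinite alphabet, P a probability distribution on A, D a proper dictionary over A, and m a positive integer such that T_m = {α ∈ A^m : no β ∈ D is a prefix of α} is infinite, with enumeration T_m = {α₁, α₂, …}. Define the increasing chain of dictionaries D_{m+1,k} = (D_m \ {α₁,…,α_k}) ∪ ⋃_{i=1}^{k} α_i A for k ≥ 1. Then lim_{k→∞} l̄(D_{m+1,k}) = l̄(D_{m+1}) and lim_{k→∞} H(D_{m+1,k}) = H(D_{m+1}), where l̄(E) = ∑_{α∈E} P(α)|α| and H(E) = -∑_{α∈E} P(α) log₂ P(α), with all sums taken in [0,∞]. -/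
open scoped ENNReal
open Filter

/-!
Strings of `D` of length at most `m` lie in every dictionary involved. Apart from them,
`D_{m+1,k}` is the disjoint union of the blocks `αᵢA` (`i < k`) and `{αᵢ}` (`i ≥ k`), and by
properness `D_{m+1}` is the disjoint union of all the `αᵢA`. Both `f = P·|·|` and
`f = -P log₂ P` satisfy `f(α) ≤ ∑ₐ f(αa)`, so the `k`-th sum is squeezed between the partial
sums `∑_{i<k} ∑ₐ f(αᵢa)` and the sum over `D_{m+1}`; in `[0,∞]` both bounds converge to the latter.
-/

theorem tendsto_tsum_ite_lt_of_le {u v : ℕ → ℝ≥0∞} (huv : u ≤ v) :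
    Tendsto (fun k => ∑' i, if i < k then v i else u i) atTop (nhds (∑' i, v i)) := by
  refine tendsto_of_tendsto_of_tendsto_of_le_of_le (ENNReal.tendsto_nat_tsum v)
    tendsto_const_nhds (fun k => ?_) (fun k => ?_)
  · calc ∑ i ∈ Finset.range k, v i
        = ∑ i ∈ Finset.range k, if i < k then v i else u i :=
          Finset.sum_congr rfl fun i hi => (if_pos (Finset.mem_range.mp hi)).symm
      _ ≤ _ := ENNReal.sum_le_tsum _
  · exact ENNReal.tsum_le_tsum fun i => by split_ifs; exacts [le_rfl, huv i]

theorem entTerm_eq_ofReal_negMulLog (p : ℝ≥0∞) :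
    entTerm p = ENNReal.ofReal (Real.negMulLog p.toReal / Real.log 2) := by
  rw [entTerm, Real.negMulLog, Real.logb]
  ring_nf

theorem entTerm_mul_le (p : ℝ≥0∞) {q : ℝ≥0∞} (hq : q ≤ 1) :
    entTerm p * q ≤ entTerm (p * q) := by
  have hq1 : q.toReal ≤ 1 := ENNReal.toReal_le_of_le_ofReal zero_le_one (by simpa using hq)
  have hq_nonneg : 0 ≤ Real.negMulLog q.toReal := Real.negMulLog_nonneg ENNReal.toReal_nonneg hq1
  rw [entTerm_eq_ofReal_negMulLog, entTerm_eq_ofReal_negMulLog, ENNReal.toReal_mul,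
    ← ENNReal.ofReal_toReal (ne_top_of_le_ne_top ENNReal.one_ne_top hq),
    ← ENNReal.ofReal_mul' ENNReal.toReal_nonneg, ENNReal.toReal_ofReal ENNReal.toReal_nonneg,
    Real.negMulLog_mul]
  refine ENNReal.ofReal_le_ofReal ?_
  rw [div_mul_eq_mul_div, mul_comm]
  gcongr
  exact le_add_of_nonneg_right (mul_nonneg ENNReal.toReal_nonneg hq_nonneg)

theorem strProb_append_singleton {A : Type*} (P : PMF A) (l : List A) (a : A) :
    strProb P (l ++ [a]) = strProb P l * P a := by
  simp [strProb]

theorem entTerm_strProb_le_tsum_append {A : Type*} (P : PMF A) (l : List A) :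
    entTerm (strProb P l) ≤ ∑' a, entTerm (strProb P (l ++ [a])) :=
  calc entTerm (strProb P l) = ∑' a, entTerm (strProb P l) * P a := by
        rw [ENNReal.tsum_mul_left, P.tsum_coe, mul_one]
    _ ≤ _ := ENNReal.tsum_le_tsum fun a => by
        rw [strProb_append_singleton]; exact entTerm_mul_le _ (P.coe_le_one a)

theorem strProb_mul_length_le_tsum_append {A : Type*} (P : PMF A) (l : List A) :
    strProb P l * l.length ≤ ∑' a, strProb P (l ++ [a]) * (l ++ [a]).length :=
  calc strProb P l * l.length ≤ strProb P l * (l.length + 1) := by gcongr; exact le_self_add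
    _ = ∑' a, strProb P (l ++ [a]) * (l ++ [a]).length := by
        simp only [strProb_append_singleton, List.length_append, List.length_singleton,
          Nat.cast_add, Nat.cast_one, mul_right_comm _ _ ((l.length : ℝ≥0∞) + 1)]
        rw [ENNReal.tsum_mul_left, P.tsum_coe, mul_one]

section Strings

variable {A : Type*}

theorem length_of_mem_oneExt {α β : List A} (h : β ∈ oneExt α) : β.length = α.length + 1 := by
  obtain ⟨a, rfl⟩ := h
  simp

theorem tsum_oneExt (f : List A → ℝ≥0∞) (α : List A) :
    ∑' β : oneExt α, f β = ∑' a, f (α ++ [a]) := by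
  have hrange : oneExt α = Set.range fun a => α ++ [a] := by
    ext β
    simp [oneExt, eq_comm]
  rw [hrange, tsum_range f fun a b h => by simpa using h]

theorem disjoint_oneExt {α β : List A} (h : α ≠ β) : Disjoint (oneExt α) (oneExt β) := by
  rw [Set.disjoint_left]
  rintro _ ⟨a, rfl⟩ ⟨b, hb⟩
  exact h (List.append_inj' hb rfl).1

theorem disjoint_oneExt_singleton {α β : List A} (h : β.length ≤ α.length) :
    Disjoint (oneExt α) {β} :=
  Set.disjoint_singleton_right.mpr fun hβ => by
    have := length_of_mem_oneExt hβ
    omega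

theorem disjoint_Tset (D : Set (List A)) (n : ℕ) : Disjoint D (Tset D n) :=
  Set.disjoint_left.mpr fun α hα hT => hT.2 α hα (List.prefix_refl α)

theorem Dn_eq_union_Tset (D : Set (List A)) (n : ℕ) :
    Dn D n = {α ∈ D | α.length ≤ n} ∪ Tset D n := by
  ext α
  simp only [Dn, Dperp, Set.mem_union, Set.mem_ofPred_eq, le_iff_lt_or_eq]
  tauto

variable {D : Set (List A)} {n : ℕ}

theorem append_mem_Dperp_succ {α : List A} (hα : α ∈ Tset D n) (a : A) :
    α ++ [a] ∈ Dperp D (n + 1) := by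
  have hlen : (α ++ [a]).length = n + 1 := by simp [hα.1]
  by_cases hD : α ++ [a] ∈ D
  · exact Or.inl ⟨hD, hlen⟩
  refine Or.inr ⟨hlen, fun β hβ hpre => ?_⟩
  rcases List.prefix_concat_iff.mp hpre with rfl | hpre
  exacts [hD hβ, hα.2 β hβ hpre]

theorem length_of_mem_Dperp {β : List A} (hβ : β ∈ Dperp D n) : β.length = n := by
  rcases hβ with hβ | hβ
  exacts [hβ.2, hβ.1]

theorem dropLast_mem_Tset (hprop : IsProper D) {β : List A} (hβ : β ∈ Dperp D (n + 1)) :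
    β.dropLast ∈ Tset D n := by
  refine ⟨by simp [length_of_mem_Dperp hβ], fun γ hγ hpre => ?_⟩
  have hγβ : γ <+: β := hpre.trans (List.dropLast_prefix β)
  rcases hβ with ⟨hβD, hlen⟩ | hβT
  · have := hpre.length_le
    rw [hprop γ hγ β hβD hγβ, List.length_dropLast, hlen] at this
    omega
  · exact hβT.2 γ hγ hγβ

/-- Properness is what makes the strings of `D` of length `n + 1` extensions of strings of `Tₙ`. -/
theorem Dperp_succ_eq (hprop : IsProper D) : Dperp D (n + 1) = ⋃ α ∈ Tset D n, oneExt α := by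
  ext β
  simp only [Set.mem_iUnion, exists_prop]
  constructor
  · intro hβ
    have hne : β ≠ [] := List.ne_nil_of_length_eq_add_one (length_of_mem_Dperp hβ)
    exact ⟨_, dropLast_mem_Tset hprop hβ, _, (List.dropLast_append_getLast hne).symm⟩
  · rintro ⟨α, hα, a, rfl⟩
    exact append_mem_Dperp_succ hα a

theorem Dn_succ_eq (hprop : IsProper D) :
    Dn D (n + 1) = {α ∈ D | α.length ≤ n} ∪ ⋃ α ∈ Tset D n, oneExt α := by
  simp only [Dn, Dperp_succ_eq hprop, Nat.lt_succ_iff]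

end Strings

section ExtensionChain

variable {A : Type*} {D : Set (List A)} {m : ℕ} {e : ℕ → List A}

/-- The `i`-th block of `D_{m+1,k}`: `αᵢA` once `αᵢ` has been extended, `{αᵢ}` before. -/
def chainBlock (e : ℕ → List A) (k i : ℕ) : Set (List A) :=
  if i < k then oneExt (e i) else {e i}

theorem tsum_chainBlock (f : List A → ℝ≥0∞) (k i : ℕ) :
    ∑' β : chainBlock e k i, f β = if i < k then ∑' a, f (e i ++ [a]) else f (e i) := by
  by_cases hik : i < k
  · rw [chainBlock, if_pos hik, if_pos hik, tsum_oneExt]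
  · rw [chainBlock, if_neg hik, if_neg hik, tsum_singleton]

theorem iUnion_chainBlock (k : ℕ) :
    ⋃ i, chainBlock e k i = e '' {i | i < k}ᶜ ∪ ⋃ i < k, oneExt (e i) := by
  ext β
  simp only [chainBlock, Set.mem_iUnion, Set.mem_union, Set.mem_image, Set.mem_compl_iff,
    Set.mem_ofPred_eq, exists_prop]
  constructor
  · rintro ⟨i, hi⟩
    split_ifs at hi with hik
    exacts [Or.inr ⟨i, hik, hi⟩, Or.inl ⟨i, hik, (Set.mem_singleton_iff.mp hi).symm⟩]
  · rintro (⟨i, hik, rfl⟩ | ⟨i, hik, hi⟩)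
    · exact ⟨i, by simp [hik]⟩
    · exact ⟨i, by simpa [hik] using hi⟩

theorem extension_chain_eq (hinj : Function.Injective e) (hrange : Set.range e = Tset D m)
    (k : ℕ) :
    (Dn D m \ e '' {i | i < k}) ∪ ⋃ i < k, oneExt (e i) =
      {α ∈ D | α.length ≤ m} ∪ ⋃ i, chainBlock e k i := by
  have hS : Disjoint {α ∈ D | α.length ≤ m} (e '' {i | i < k}) :=
    ((disjoint_Tset D m).mono_left fun _ h => h.1).mono_right
      (hrange ▸ Set.image_subset_range e _)
  rw [Dn_eq_union_Tset, ← hrange, Set.union_sdiff_distrib, hS.sdiff_eq_left,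
    Set.range_sdiff_image hinj, iUnion_chainBlock, Set.union_assoc]

theorem disjoint_setOf_length_le_oneExt {α : List A} (hα : α.length = m) :
    Disjoint {β ∈ D | β.length ≤ m} (oneExt α) :=
  Set.disjoint_left.mpr fun β hβ hext => by
    have := length_of_mem_oneExt hext
    have := hβ.2
    omega

theorem pairwiseDisjoint_chainBlock (hinj : Function.Injective e) (hlen : ∀ i, (e i).length = m)
    (k : ℕ) : Set.univ.PairwiseDisjoint (chainBlock e k) := by
  intro i _ j _ hij
  have hne := hinj.ne hij
  simp only [Function.onFun, chainBlock]
  split_ifs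
  · exact disjoint_oneExt hne
  · exact disjoint_oneExt_singleton (by rw [hlen, hlen])
  · exact (disjoint_oneExt_singleton (by rw [hlen, hlen])).symm
  · exact Set.disjoint_singleton.mpr hne

theorem disjoint_setOf_length_le_iUnion_chainBlock (hrange : Set.range e = Tset D m) (k : ℕ) :
    Disjoint {β ∈ D | β.length ≤ m} (⋃ i, chainBlock e k i) := by
  refine Set.disjoint_iUnion_right.mpr fun i => ?_
  have he : e i ∈ Tset D m := hrange ▸ Set.mem_range_self i
  unfold chainBlock
  split_ifs
  · exact disjoint_setOf_length_le_oneExt he.1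
  · exact Set.disjoint_singleton_right.mpr fun h => Set.disjoint_left.mp (disjoint_Tset D m) h.1 he

theorem tendsto_tsum_extension_chain (hprop : IsProper D) (hinj : Function.Injective e)
    (hrange : Set.range e = Tset D m) (f : List A → ℝ≥0∞)
    (hf : ∀ i, f (e i) ≤ ∑' a, f (e i ++ [a])) :
    Tendsto (fun k => ∑' α : ((Dn D m \ e '' {i | i < k}) ∪ ⋃ i < k, oneExt (e i) : Set _), f α)
      atTop (nhds (∑' α : Dn D (m + 1), f α)) := by
  have hlen (i : ℕ) : (e i).length = m := (hrange ▸ Set.mem_range_self i : e i ∈ Tset D m).1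
  have hchain (k : ℕ) :
      ∑' α : ((Dn D m \ e '' {i | i < k}) ∪ ⋃ i < k, oneExt (e i) : Set _), f α =
        ∑' α : {β ∈ D | β.length ≤ m}, f α +
          ∑' i, if i < k then ∑' a, f (e i ++ [a]) else f (e i) := by
    rw [extension_chain_eq hinj hrange,
      ENNReal.summable.tsum_union_disjoint (disjoint_setOf_length_le_iUnion_chainBlock hrange k)
        ENNReal.summable,
      ENNReal.tsum_biUnion (pairwiseDisjoint_chainBlock hinj hlen k)]
    simp only [tsum_chainBlock]
  have hlimit : ∑' α : Dn D (m + 1), f α =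
      ∑' α : {β ∈ D | β.length ≤ m}, f α + ∑' i, ∑' a, f (e i ++ [a]) := by
    rw [Dn_succ_eq hprop, ← hrange, Set.biUnion_range,
      ENNReal.summable.tsum_union_disjoint
        (Set.disjoint_iUnion_right.mpr fun i => disjoint_setOf_length_le_oneExt (hlen i))
        ENNReal.summable,
      ENNReal.tsum_biUnion fun i _ j _ hij => disjoint_oneExt (hinj.ne hij)]
    simp only [tsum_oneExt]
  simp only [hchain, hlimit]
  exact (tendsto_tsum_ite_lt_of_le hf).const_add _

end ExtensionChain

theorem tendsto_avgLen_and_dictEntropy_extension_chain_general {A : Type*}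
    (P : PMF A) (D : Set (List A))
    (hprop : IsProper D) (m : ℕ)
    (e : ℕ → List A) (hinj : Function.Injective e)
    (hrange : Set.range e = Tset D m) :
    Tendsto
      (fun k : ℕ =>
        avgLen P ((Dn D m \ e '' {i | i < k}) ∪ ⋃ i < k, oneExt (e i)))
      atTop (nhds (avgLen P (Dn D (m + 1)))) ∧
    Tendsto
      (fun k : ℕ =>
        dictEntropy P ((Dn D m \ e '' {i | i < k}) ∪ ⋃ i < k, oneExt (e i)))
      atTop (nhds (dictEntropy P (Dn D (m + 1)))) :=
  ⟨tendsto_tsum_extension_chain hprop hinj hrange (fun α => strProb P α * α.length)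
      fun i => strProb_mul_length_le_tsum_append P (e i),
    tendsto_tsum_extension_chain hprop hinj hrange (fun α => entTerm (strProb P α))
      fun i => entTerm_strProb_le_tsum_append P (e i)⟩

/-- Over a countably infinite alphabet, if `D` is proper and
`T_m` is infinite with enumeration `T_m = {α₁, α₂, …}` (given by an injection
`e : ℕ → List A` with range `T_m`), then for the chain
`D_{m+1,k} = (D_m \ {α₁,…,α_k}) ∪ ⋃_{i=1}^k αᵢA` one has
`lim_{k→∞} l̄(D_{m+1,k}) = l̄(D_{m+1})` and
`lim_{k→∞} H(D_{m+1,k}) = H(D_{m+1})`. -/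
theorem tendsto_avgLen_and_dictEntropy_extension_chain {A : Type*}
    [Countable A] [Infinite A] (P : PMF A) (D : Set (List A))
    (hdict : IsDictionary D) (hprop : IsProper D) (m : ℕ) (hm : 0 < m)
    (e : ℕ → List A) (hinj : Function.Injective e)
    (hrange : Set.range e = Tset D m) :
    Tendsto
      (fun k : ℕ =>
        avgLen P ((Dn D m \ e '' {i | i < k}) ∪ ⋃ i < k, oneExt (e i)))
      atTop (nhds (avgLen P (Dn D (m + 1)))) ∧
    Tendsto
      (fun k : ℕ =>
        dictEntropy P ((Dn D m \ e '' {i | i < k}) ∪ ⋃ i < k, oneExt (e i)))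
      atTop (nhds (dictEntropy P (Dn D (m + 1)))) :=
  tendsto_avgLen_and_dictEntropy_extension_chain_general P D hprop m e hinj hrange
end
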